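/- arXiv:1806.10021 — 4 statements merged into one kernel-verified Lean document; each statement's English description precedes it below -/
import Mathlib

section
/- Let n ≥ 2, let μ > 0, and let φ be a Schwartz function on ℝ^{n−1}. For x' ∈ ℝ^{n−1} and x_n > 0 define u(x', x_n) = (2π)^{−n} ∫_{ℝⁿ} e^{i(x'·ξ' + x_n ξ_n)} φ̂(ξ') (⟨ξ'⟩ + iξ_n)^{−1−μ} dξ (the integral converges absolutely). Then Γ(μ+1) · x_n^{−μ} · u(x', x_n) → φ(x') uniformly in x' ∈ ℝ^{n−1} as x_n → 0+. -/
open MeasureTheory Set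

/-- The Fourier transform `φ̂(ξ') = ∫ e^{-i y'·ξ'} φ(y') dy'` on `ℝ^m`. -/
noncomputable def fourierTr {m : ℕ} (φ : EuclideanSpace ℝ (Fin m) → ℂ)
    (ξ : EuclideanSpace ℝ (Fin m)) : ℂ :=
  ∫ y : EuclideanSpace ℝ (Fin m), Complex.exp (-Complex.I * (∑ i, y i * ξ i : ℝ)) * φ y

/-- The operator `K₀^μ` of Lemma 3.3:
`K₀^μ φ(x', x_n) = (2π)^{-n} ∫_{ℝⁿ} e^{i(x'·ξ' + x_n ξ_n)} φ̂(ξ') (⟨ξ'⟩+iξ_n)^{-1-μ} dξ`,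
with `⟨ξ'⟩ = (1+|ξ'|²)^{1/2}` and principal complex powers. -/
noncomputable def poissonKmu (n : ℕ) (μ : ℝ)
    (φ : SchwartzMap (EuclideanSpace ℝ (Fin (n - 1))) ℂ)
    (x' : EuclideanSpace ℝ (Fin (n - 1))) (t : ℝ) : ℂ :=
  ((2 * (Real.pi : ℂ)) ^ n)⁻¹ *
    ∫ ξ : EuclideanSpace ℝ (Fin (n - 1)) × ℝ,
      Complex.exp (Complex.I * ((∑ i, x' i * ξ.1 i : ℝ) + t * ξ.2 : ℝ)) *
        fourierTr (fun y => φ y) ξ.1 *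
        ((Real.sqrt (1 + ‖ξ.1‖ ^ 2) : ℂ) + (ξ.2 : ℂ) * Complex.I) ^ (-1 - (μ : ℂ))

/-!
For `t > 0` and `a > 0` the `ξ_n`-integral is explicit:
`∫ e^{itξ} (a + iξ)^{-1-μ} dξ = 2π t^μ e^{-at} / Γ(μ+1)`. This is Fourier inversion for
`τ₊^μ e^{-aτ}`, whose Fourier transform `Γ(μ+1) (a + 2πiξ)^{-1-μ}` is a Laplace transform,
computed for real `a` and continued analytically to the right half-plane. By Fubini,
`Γ(μ+1) t^{-μ} K₀^μ φ(x', t) = (2π)^{1-n} ∫ e^{ix'·ξ'} e^{-t⟨ξ'⟩} φ̂(ξ') dξ'`, while Fourier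
inversion gives the same formula for `φ(x')` without the factor `e^{-t⟨ξ'⟩}`. The difference is
bounded by `(2π)^{1-n} ∫ |φ̂| (1 - e^{-t⟨ξ'⟩})` independently of `x'`, and this tends to `0` by
dominated convergence.
-/

open Complex Filter Topology FourierTransform RealInnerProductSpace
open scoped Real

section Laplace

variable {ν : ℝ}

lemma integrableOn_rpow_mul_exp_neg_mul (hν : -1 < ν) {b : ℝ} (hb : 0 < b) :
    IntegrableOn (fun t : ℝ => t ^ ν * Real.exp (-(b * t))) (Ioi 0) := by
  simpa [Real.rpow_one] using integrableOn_rpow_mul_exp_neg_mul_rpow hν one_pos hb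

lemma norm_cpow_mul_cexp_neg_mul {t : ℝ} (ht : 0 < t) (z : ℂ) :
    ‖(t : ℂ) ^ (ν : ℂ) * cexp (-(z * t))‖ = t ^ ν * Real.exp (-(z.re * t)) := by
  rw [norm_mul, norm_exp, norm_cpow_eq_rpow_re_of_pos ht]
  simp

lemma integrableOn_cpow_mul_cexp_neg_mul (hν : -1 < ν) {z : ℂ} (hz : 0 < z.re) :
    IntegrableOn (fun t : ℝ => (t : ℂ) ^ (ν : ℂ) * cexp (-(z * t))) (Ioi 0) := by
  refine (integrableOn_rpow_mul_exp_neg_mul hν hz).mono' (by fun_prop) ?_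
  filter_upwards [ae_restrict_mem measurableSet_Ioi] with t ht
  rw [norm_cpow_mul_cexp_neg_mul ht]

lemma hasDerivAt_integral_cpow_mul_cexp_neg_mul (hν : -1 < ν) {w : ℂ} (hw : 0 < w.re) :
    HasDerivAt (fun z : ℂ => ∫ t : ℝ in Ioi 0, (t : ℂ) ^ (ν : ℂ) * cexp (-(z * t)))
      (∫ t : ℝ in Ioi 0, (t : ℂ) ^ (ν : ℂ) * (cexp (-(w * t)) * -(t : ℂ))) w := by
  have hr : 0 < w.re / 2 := by linarith
  refine (hasDerivAt_integral_of_dominated_loc_of_deriv_le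
    (F := fun z (t : ℝ) => (t : ℂ) ^ (ν : ℂ) * cexp (-(z * t)))
    (F' := fun z (t : ℝ) => (t : ℂ) ^ (ν : ℂ) * (cexp (-(z * t)) * -(t : ℂ)))
    (Metric.ball_mem_nhds w hr)
    (Eventually.of_forall fun _ => by fun_prop) (integrableOn_cpow_mul_cexp_neg_mul hν hw)
    (by fun_prop) ?_ (integrableOn_rpow_mul_exp_neg_mul (ν := ν + 1) (by linarith) hr) ?_).2
  · filter_upwards [ae_restrict_mem measurableSet_Ioi] with t (ht : 0 < t) z hz
    have hre : w.re / 2 ≤ z.re := by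
      have := (abs_re_le_norm (z - w)).trans (mem_ball_iff_norm.mp hz).le
      rw [sub_re] at this
      linarith [neg_abs_le (z.re - w.re)]
    simp only [norm_mul, norm_exp, norm_cpow_eq_rpow_re_of_pos ht, norm_neg, norm_real,
      Real.norm_of_nonneg ht.le, neg_re, mul_re, ofReal_re, ofReal_im, mul_zero, sub_zero]
    rw [Real.rpow_add ht, Real.rpow_one, mul_comm (Real.exp _) t, ← mul_assoc]
    gcongr
  · filter_upwards with t z _
    exact ((hasDerivAt_mul_const (t : ℂ)).neg.cexp).const_mul _

lemma integral_cpow_mul_cexp_neg_mul_Ioi_of_re_pos (hν : -1 < ν) {z : ℂ} (hz : 0 < z.re) :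
    ∫ t : ℝ in Ioi 0, (t : ℂ) ^ (ν : ℂ) * cexp (-(z * t)) = Gamma (ν + 1) * z ^ (-1 - (ν : ℂ)) := by
  set F : ℂ → ℂ := fun w => ∫ t : ℝ in Ioi 0, (t : ℂ) ^ (ν : ℂ) * cexp (-(w * t))
  set G : ℂ → ℂ := fun w => Gamma (ν + 1) * w ^ (-1 - (ν : ℂ))
  show F z = G z
  set U : Set ℂ := {w | 0 < w.re}
  have hU : IsOpen U := isOpen_lt continuous_const continuous_re
  have hF : AnalyticOnNhd ℂ F U := DifferentiableOn.analyticOnNhd (fun w hw =>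
    (hasDerivAt_integral_cpow_mul_cexp_neg_mul hν hw).differentiableAt.differentiableWithinAt) hU
  have hG : AnalyticOnNhd ℂ G U := DifferentiableOn.analyticOnNhd (fun w hw =>
    ((differentiableAt_id.cpow (differentiableAt_const _) (Or.inl hw)).const_mul
      _).differentiableWithinAt) hU
  have h_real (r : ℝ) (hr : 0 < r) : F r = G r := by
    have harg : (r : ℂ).arg ≠ π := by
      rw [arg_ofReal_of_nonneg hr.le]
      exact Real.pi_ne_zero.symm
    have h := integral_cpow_mul_exp_neg_mul_Ioi (a := ν + 1) (by simp; linarith) hr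
    rw [add_sub_cancel_right] at h
    rw [show F r = _ from h, mul_comm, one_div, inv_cpow _ _ harg, ← cpow_neg]
    congr 2
    ring
  have h_ofReal : Tendsto ((↑) : ℝ → ℂ) (𝓝[>] 1) (𝓝[≠] 1) :=
    tendsto_nhdsWithin_of_tendsto_nhds_of_eventually_within _
      ((continuous_ofReal.tendsto' 1 1 ofReal_one).mono_left nhdsWithin_le_nhds)
      (eventually_nhdsWithin_of_forall fun r hr => ofReal_ne_one.mpr (ne_of_gt hr))
  have h_freq : ∃ᶠ w in 𝓝[≠] (1 : ℂ), F w = G w := h_ofReal.frequently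
    (eventually_nhdsWithin_of_forall fun r (hr : r ∈ Ioi 1) =>
      h_real r (one_pos.trans hr)).frequently
  exact hF.eqOn_of_preconnected_of_frequently_eq hG (convex_halfSpace_re_gt 0).isPreconnected
    (by simp [U]) h_freq hz

end Laplace

lemma norm_cpow_ofReal_le_of_nonpos {z : ℂ} {r s : ℝ} (hr : 0 < r) (hz : r ≤ ‖z‖) (hs : s ≤ 0) :
    ‖z ^ (s : ℂ)‖ ≤ r ^ s := by
  rw [norm_cpow_real]
  exact Real.rpow_le_rpow_of_nonpos hr hz hs

lemma integrable_sqrt_one_add_sq_rpow {s : ℝ} (hs : s < -1) :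
    Integrable (fun x : ℝ => √(1 + x ^ 2) ^ s) := by
  refine (integrable_rpow_neg_one_add_norm_sq (E := ℝ) (μ := volume) (r := -s)
    (by simp; linarith)).congr (Eventually.of_forall fun x => ?_)
  dsimp only
  rw [Real.norm_eq_abs, sq_abs, Real.sqrt_eq_rpow, ← Real.rpow_mul (by positivity)]
  ring_nf

section OneSided

variable {ν a : ℝ}

noncomputable def oneSidedPowExp (ν a : ℝ) : ℝ → ℂ :=
  (Ioi 0).indicator fun τ => (τ : ℂ) ^ (ν : ℂ) * cexp (-(a * τ))

lemma oneSidedPowExp_eq_ofReal (hν : ν ≠ 0) :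
    oneSidedPowExp ν a = fun τ => ((max τ 0 ^ ν * Real.exp (-(a * τ)) : ℝ) : ℂ) := by
  funext τ
  rcases lt_or_ge 0 τ with hτ | hτ
  · rw [oneSidedPowExp, indicator_of_mem (show τ ∈ Ioi 0 from hτ), max_eq_left hτ.le, ofReal_mul,
      ofReal_cpow hτ.le, ofReal_exp]
    push_cast
    ring_nf
  · rw [oneSidedPowExp, indicator_of_notMem (show τ ∉ Ioi 0 from hτ.not_gt), max_eq_right hτ,
      Real.zero_rpow hν, zero_mul, ofReal_zero]

lemma continuous_oneSidedPowExp (hν : 0 < ν) : Continuous (oneSidedPowExp ν a) := by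
  rw [oneSidedPowExp_eq_ofReal hν.ne']
  refine continuous_ofReal.comp (Continuous.mul ?_ (by fun_prop))
  exact (continuous_id.max continuous_const).rpow_const fun _ => Or.inr hν.le

lemma integrable_oneSidedPowExp (hν : -1 < ν) (ha : 0 < a) : Integrable (oneSidedPowExp ν a) :=
  (integrable_indicator_iff measurableSet_Ioi).mpr
    (integrableOn_cpow_mul_cexp_neg_mul hν (z := a) (by simpa using ha))

lemma fourier_oneSidedPowExp (hν : -1 < ν) (ha : 0 < a) (ξ : ℝ) :
    𝓕 (oneSidedPowExp ν a) ξ = Gamma (ν + 1) * (a + (2 * π * ξ : ℝ) * I) ^ (-1 - (ν : ℂ)) := by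
  rw [Real.fourier_eq', ← integral_cpow_mul_cexp_neg_mul_Ioi_of_re_pos hν (by simpa using ha),
    ← integral_indicator measurableSet_Ioi]
  congr 1
  funext τ
  rw [oneSidedPowExp, smul_eq_mul]
  rcases em (τ ∈ Ioi 0) with hτ | hτ
  · rw [indicator_of_mem hτ, indicator_of_mem hτ, mul_left_comm, ← exp_add]
    congr 2
    simp only [RCLike.inner_apply, conj_trivial]
    push_cast
    ring
  · rw [indicator_of_notMem hτ, indicator_of_notMem hτ, mul_zero]

lemma integrable_fourier_oneSidedPowExp (hν : 0 < ν) (ha : 0 < a) :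
    Integrable (𝓕 (oneSidedPowExp ν a)) := by
  rw [funext (fourier_oneSidedPowExp (a := a) (by linarith : -1 < ν) ha)]
  set k := min a (2 * π)
  have hk : 0 < k := lt_min ha Real.two_pi_pos
  have h_bound (ξ : ℝ) : ‖Gamma (ν + 1) * ((a : ℂ) + (2 * π * ξ : ℝ) * I) ^ (-1 - (ν : ℂ))‖ ≤
      ‖Gamma (ν + 1)‖ * (k ^ (-1 - ν) * √(1 + ξ ^ 2) ^ (-1 - ν)) := by
    have h_norm : k * √(1 + ξ ^ 2) ≤ ‖(a : ℂ) + (2 * π * ξ : ℝ) * I‖ := by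
      rw [norm_add_mul_I, Real.le_sqrt (by positivity) (by positivity), mul_pow,
        Real.sq_sqrt (by positivity)]
      have h₁ : k ^ 2 ≤ a ^ 2 := pow_le_pow_left₀ hk.le (min_le_left _ _) 2
      have h₂ : k ^ 2 ≤ (2 * π) ^ 2 := pow_le_pow_left₀ hk.le (min_le_right _ _) 2
      nlinarith [sq_nonneg ξ]
    rw [norm_mul,
      show (-1 - (ν : ℂ)) = ((-1 - ν : ℝ) : ℂ) by push_cast; ring,
      ← Real.mul_rpow hk.le (by positivity)]
    gcongr
    exact norm_cpow_ofReal_le_of_nonpos (by positivity) h_norm (by linarith)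
  refine (((integrable_sqrt_one_add_sq_rpow (by linarith)).const_mul _).const_mul _).mono'
    (Measurable.aestronglyMeasurable (by fun_prop)) (Eventually.of_forall h_bound)

lemma integral_cexp_mul_add_mul_I_cpow (hν : 0 < ν) (ha : 0 < a) {t : ℝ} (ht : 0 < t) :
    ∫ ξ : ℝ, cexp (I * (t * ξ : ℝ)) * ((a : ℂ) + ξ * I) ^ (-1 - (ν : ℂ)) =
      2 * π * (t ^ ν : ℝ) * (Real.exp (-(a * t)) : ℝ) / Gamma (ν + 1) := by
  have h_inv := congrFun ((continuous_oneSidedPowExp hν).fourierInv_fourier_eq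
    (integrable_oneSidedPowExp (by linarith) ha) (integrable_fourier_oneSidedPowExp hν ha)) t
  simp_rw [Real.fourierInv_eq', fourier_oneSidedPowExp (by linarith : -1 < ν) ha,
    oneSidedPowExp, indicator_of_mem (show t ∈ Ioi 0 from ht)] at h_inv
  have hΓ : Gamma (ν + 1) ≠ 0 := Gamma_ne_zero_of_re_pos (by simp; linarith)
  calc ∫ ξ : ℝ, cexp (I * (t * ξ : ℝ)) * ((a : ℂ) + ξ * I) ^ (-1 - (ν : ℂ))
      = 2 * π * ∫ η : ℝ, cexp (I * (t * (2 * π * η) : ℝ)) *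
          ((a : ℂ) + (2 * π * η : ℝ) * I) ^ (-1 - (ν : ℂ)) := by
        rw [Measure.integral_comp_mul_left (fun ξ : ℝ =>
          cexp (I * (t * ξ : ℝ)) * ((a : ℂ) + ξ * I) ^ (-1 - (ν : ℂ))),
          abs_of_pos (by positivity), real_smul, ← mul_assoc]
        push_cast
        field_simp
    _ = 2 * π / Gamma (ν + 1) * ∫ η : ℝ, cexp ((2 * π * ⟪η, t⟫ : ℝ) * I) •
          (Gamma (ν + 1) * ((a : ℂ) + (2 * π * η : ℝ) * I) ^ (-1 - (ν : ℂ))) := by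
        rw [← integral_const_mul, ← integral_const_mul]
        congr 1
        funext η
        rw [smul_eq_mul, RCLike.inner_apply, conj_trivial]
        field_simp
    _ = _ := by
        rw [h_inv, ofReal_cpow ht.le, ofReal_exp]
        push_cast
        ring

end OneSided

lemma tendstoUniformly_integral_mul_mul {ι X V 𝕜 : Type*} [RCLike 𝕜] [MeasurableSpace V]
    {μ : Measure V} {l : Filter ι} [l.IsCountablyGenerated] {g : X → V → 𝕜} {m : ι → V → 𝕜}
    {ψ : V → 𝕜} (hψ : Integrable ψ μ) (hg_meas : ∀ x, AEStronglyMeasurable (g x) μ)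
    (hg : ∀ x ξ, ‖g x ξ‖ ≤ 1) (hm_meas : ∀ᶠ i in l, AEStronglyMeasurable (m i) μ)
    (hm : ∀ᶠ i in l, ∀ ξ, ‖m i ξ‖ ≤ 1) (hm_lim : ∀ᵐ ξ ∂μ, Tendsto (fun i => m i ξ) l (𝓝 1)) :
    TendstoUniformly (fun i x => ∫ ξ, g x ξ * m i ξ * ψ ξ ∂μ) (fun x => ∫ ξ, g x ξ * ψ ξ ∂μ) l := by
  have h_err_meas {i} (hi : AEStronglyMeasurable (m i) μ) :
      AEStronglyMeasurable (fun ξ => ‖m i ξ - 1‖ * ‖ψ ξ‖) μ :=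
    (hi.sub aestronglyMeasurable_const).norm.mul hψ.norm.aestronglyMeasurable
  have h_err_le {i} (hi : ∀ ξ, ‖m i ξ‖ ≤ 1) (ξ : V) : ‖‖m i ξ - 1‖ * ‖ψ ξ‖‖ ≤ 2 * ‖ψ ξ‖ := by
    rw [Real.norm_of_nonneg (by positivity)]
    gcongr
    linarith [norm_sub_le (m i ξ) 1, hi ξ, norm_one (α := 𝕜)]
  have h_err : Tendsto (fun i => ∫ ξ, ‖m i ξ - 1‖ * ‖ψ ξ‖ ∂μ) l (𝓝 0) := by
    simpa using tendsto_integral_filter_of_dominated_convergence (fun ξ => 2 * ‖ψ ξ‖)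
      (hm_meas.mono fun _ => h_err_meas) (hm.mono fun _ hi => Eventually.of_forall (h_err_le hi))
      (hψ.norm.const_mul 2) (hm_lim.mono fun ξ hξ => (hξ.sub_const 1).norm.mul_const ‖ψ ξ‖)
  rw [Metric.tendstoUniformly_iff]
  intro ε hε
  filter_upwards [h_err.eventually_lt_const hε, hm_meas, hm] with i hi_lt hi_meas hi_le x
  have h_int_m : Integrable (fun ξ => g x ξ * m i ξ * ψ ξ) μ :=
    hψ.bdd_mul ((hg_meas x).mul hi_meas) (Eventually.of_forall fun ξ => by
      simpa [norm_mul] using mul_le_one₀ (hg x ξ) (norm_nonneg _) (hi_le ξ))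
  have h_int_one : Integrable (fun ξ => g x ξ * ψ ξ) μ :=
    hψ.bdd_mul (hg_meas x) (Eventually.of_forall (hg x))
  calc dist (∫ ξ, g x ξ * ψ ξ ∂μ) (∫ ξ, g x ξ * m i ξ * ψ ξ ∂μ)
      = ‖∫ ξ, g x ξ * (m i ξ - 1) * ψ ξ ∂μ‖ := by
        rw [dist_comm, dist_eq_norm, ← integral_sub h_int_m h_int_one]
        simp only [mul_sub, sub_mul, mul_one]
    _ ≤ ∫ ξ, ‖m i ξ - 1‖ * ‖ψ ξ‖ ∂μ := by
        refine norm_integral_le_of_norm_le ((hψ.norm.const_mul 2).mono' (h_err_meas hi_meas)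
          (Eventually.of_forall (h_err_le hi_le))) (Eventually.of_forall fun ξ => ?_)
        rw [norm_mul, norm_mul, mul_assoc]
        exact mul_le_of_le_one_left (by positivity) (hg x ξ)
    _ < ε := hi_lt

section FourierTr

variable {m : ℕ}

lemma sum_mul_eq_inner (x y : EuclideanSpace ℝ (Fin m)) : ∑ i, x i * y i = ⟪x, y⟫ := by
  simp [PiLp.inner_apply, mul_comm]

lemma fourierTr_eq_fourier (φ : EuclideanSpace ℝ (Fin m) → ℂ) (ξ : EuclideanSpace ℝ (Fin m)) :
    fourierTr φ ξ = 𝓕 φ ((2 * π)⁻¹ • ξ) := by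
  rw [fourierTr, Real.fourier_eq']
  congr 1
  funext y
  rw [smul_eq_mul, real_inner_smul_right, ← sum_mul_eq_inner]
  congr 2
  push_cast
  field_simp

lemma integrable_fourierTr {φ : EuclideanSpace ℝ (Fin m) → ℂ} (hφ : Integrable (𝓕 φ)) :
    Integrable (fourierTr φ) := by
  simpa only [funext (fourierTr_eq_fourier φ)] using
    hφ.comp_smul (inv_ne_zero Real.two_pi_pos.ne')

lemma integral_cexp_mul_fourierTr {φ : EuclideanSpace ℝ (Fin m) → ℂ} (hφ_cont : Continuous φ)
    (hφ : Integrable φ) (hFφ : Integrable (𝓕 φ)) (x : EuclideanSpace ℝ (Fin m)) :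
    ((2 * π : ℂ) ^ m)⁻¹ * ∫ ξ, cexp (I * (∑ i, x i * ξ i : ℝ)) * fourierTr φ ξ = φ x := by
  set F := fun η : EuclideanSpace ℝ (Fin m) => cexp ((2 * π * ⟪η, x⟫ : ℝ) * I) • 𝓕 φ η
  have h_phase : ∫ ξ, cexp (I * (∑ i, x i * ξ i : ℝ)) * fourierTr φ ξ =
      ∫ ξ, F ((2 * π)⁻¹ • ξ) := by
    refine integral_congr_ae (Eventually.of_forall fun ξ => ?_)
    simp only [F, fourierTr_eq_fourier, smul_eq_mul]
    rw [real_inner_smul_left, real_inner_comm, ← sum_mul_eq_inner,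
      mul_inv_cancel_left₀ Real.two_pi_pos.ne', mul_comm I]
  rw [h_phase, Measure.integral_comp_smul, finrank_euclideanSpace_fin, ← Real.fourierInv_eq',
    hφ_cont.fourierInv_fourier_eq hφ hFφ, abs_of_pos (by positivity), inv_pow, inv_inv,
    real_smul, ← mul_assoc]
  push_cast
  field_simp

end FourierTr

section PoissonKmu

variable {m : ℕ} {μ : ℝ}

lemma norm_japaneseBracket_add_mul_I_cpow_le (hμ : 0 < μ) (ξ : EuclideanSpace ℝ (Fin m))
    (τ : ℝ) : ‖((√(1 + ‖ξ‖ ^ 2) : ℂ) + τ * I) ^ (-1 - (μ : ℂ))‖ ≤ √(1 + τ ^ 2) ^ (-1 - μ) := by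
  rw [show (-1 - (μ : ℂ)) = ((-1 - μ : ℝ) : ℂ) by push_cast; ring]
  refine norm_cpow_ofReal_le_of_nonpos (by positivity) ?_ (by linarith)
  rw [norm_add_mul_I, Real.sq_sqrt (by positivity)]
  gcongr
  nlinarith [sq_nonneg ‖ξ‖]

lemma integrable_poissonKmu_integrand (hμ : 0 < μ) {ψ : EuclideanSpace ℝ (Fin m) → ℂ}
    (hψ : Integrable ψ) (x' : EuclideanSpace ℝ (Fin m)) (t : ℝ) :
    Integrable (fun ξ : EuclideanSpace ℝ (Fin m) × ℝ =>
      cexp (I * ((∑ i, x' i * ξ.1 i : ℝ) + t * ξ.2 : ℝ)) * ψ ξ.1 *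
        ((√(1 + ‖ξ.1‖ ^ 2) : ℂ) + ξ.2 * I) ^ (-1 - (μ : ℂ))) := by
  rw [Measure.volume_eq_prod]
  have h_phase : Measurable fun ξ : EuclideanSpace ℝ (Fin m) × ℝ =>
      cexp (I * ((∑ i, x' i * ξ.1 i : ℝ) + t * ξ.2 : ℝ)) := by
    fun_prop
  have h_kernel : Measurable fun ξ : EuclideanSpace ℝ (Fin m) × ℝ =>
      ((√(1 + ‖ξ.1‖ ^ 2) : ℂ) + ξ.2 * I) ^ (-1 - (μ : ℂ)) := by
    fun_prop
  have h_meas := (h_phase.aestronglyMeasurable.mul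
    (hψ.aestronglyMeasurable.comp_fst (ν := volume))).mul h_kernel.aestronglyMeasurable
  refine (hψ.norm.mul_prod (integrable_sqrt_one_add_sq_rpow (s := -1 - μ) (by linarith))).mono'
    h_meas (Eventually.of_forall fun ξ => ?_)
  rw [norm_mul, norm_mul, norm_exp_I_mul_ofReal, one_mul]
  exact mul_le_mul_of_nonneg_left (norm_japaneseBracket_add_mul_I_cpow_le hμ ξ.1 ξ.2)
    (norm_nonneg _)

lemma integrable_fourier_schwartz (φ : SchwartzMap (EuclideanSpace ℝ (Fin m)) ℂ) :
    Integrable (𝓕 fun y => φ y) := by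
  rw [← SchwartzMap.fourier_coe]
  exact (𝓕 φ).integrable

lemma gamma_mul_rpow_neg_mul_poissonKmu {n : ℕ} (hn : 1 ≤ n) (hμ : 0 < μ)
    (φ : SchwartzMap (EuclideanSpace ℝ (Fin (n - 1))) ℂ) (x' : EuclideanSpace ℝ (Fin (n - 1)))
    {t : ℝ} (ht : 0 < t) :
    Gamma (μ + 1) * ((t ^ (-μ) : ℝ) : ℂ) * poissonKmu n μ φ x' t =
      ((2 * π : ℂ) ^ (n - 1))⁻¹ * ∫ ξ, cexp (I * (∑ i, x' i * ξ i : ℝ)) *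
        (Real.exp (-(√(1 + ‖ξ‖ ^ 2) * t)) : ℂ) * fourierTr (fun y => φ y) ξ := by
  have h_int := integrable_poissonKmu_integrand hμ
    (integrable_fourierTr (integrable_fourier_schwartz φ)) x' t
  rw [Measure.volume_eq_prod] at h_int
  rw [poissonKmu, Measure.volume_eq_prod, integral_prod _ h_int]
  set ψ := fourierTr fun y => φ y
  have h_inner (ξ : EuclideanSpace ℝ (Fin (n - 1))) :
      ∫ τ : ℝ, cexp (I * ((∑ i, x' i * ξ i : ℝ) + t * τ : ℝ)) * ψ ξ *
        ((√(1 + ‖ξ‖ ^ 2) : ℂ) + τ * I) ^ (-1 - (μ : ℂ)) =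
      2 * π * (t ^ μ : ℝ) / Gamma (μ + 1) *
        (cexp (I * (∑ i, x' i * ξ i : ℝ)) * (Real.exp (-(√(1 + ‖ξ‖ ^ 2) * t)) : ℂ) * ψ ξ) := by
    have h_split (τ : ℝ) : cexp (I * ((∑ i, x' i * ξ i : ℝ) + t * τ : ℝ)) * ψ ξ *
        ((√(1 + ‖ξ‖ ^ 2) : ℂ) + τ * I) ^ (-1 - (μ : ℂ)) =
        cexp (I * (∑ i, x' i * ξ i : ℝ)) * ψ ξ *
          (cexp (I * (t * τ : ℝ)) * ((√(1 + ‖ξ‖ ^ 2) : ℂ) + τ * I) ^ (-1 - (μ : ℂ))) := by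
      rw [ofReal_add, mul_add, exp_add]
      ring
    simp_rw [h_split, integral_const_mul]
    rw [integral_cexp_mul_add_mul_I_cpow hμ (by positivity) ht]
    ring
  simp_rw [h_inner]
  rw [integral_const_mul]
  have h_pow : (2 * π : ℂ) ^ n = (2 * π : ℂ) ^ (n - 1) * (2 * π) := by
    rw [← pow_succ, Nat.sub_add_cancel hn]
  have hΓ : Gamma (μ + 1) ≠ 0 := Gamma_ne_zero_of_re_pos (by simp; linarith)
  have ht_pow : ((t ^ μ : ℝ) : ℂ) ≠ 0 := ofReal_ne_zero.mpr (Real.rpow_pos_of_pos ht μ).ne'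
  rw [Real.rpow_neg ht.le, ofReal_inv, h_pow]
  simp only [← mul_assoc]
  congr 1
  field_simp

end PoissonKmu

/-- `K₀^μ` is a right inverse of the weighted trace `γ₀^μ : u ↦ Γ(μ+1) γ₀(u/x_n^μ)`:
the defining integral converges absolutely for `x_n > 0`, and
`Γ(μ+1) x_n^{-μ} (K₀^μ φ)(x', x_n) → φ(x')` uniformly in `x'` as `x_n → 0+`. -/
theorem poissonKmu_weighted_trace (n : ℕ) (hn : 2 ≤ n) (μ : ℝ) (hμ : 0 < μ)
    (φ : SchwartzMap (EuclideanSpace ℝ (Fin (n - 1))) ℂ) :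
    (∀ (x' : EuclideanSpace ℝ (Fin (n - 1))) (t : ℝ), 0 < t →
      Integrable
        (fun ξ : EuclideanSpace ℝ (Fin (n - 1)) × ℝ =>
          Complex.exp (Complex.I * ((∑ i, x' i * ξ.1 i : ℝ) + t * ξ.2 : ℝ)) *
            fourierTr (fun y => φ y) ξ.1 *
            ((Real.sqrt (1 + ‖ξ.1‖ ^ 2) : ℂ) + (ξ.2 : ℂ) * Complex.I) ^ (-1 - (μ : ℂ)))
        volume) ∧
    TendstoUniformly
      (fun t x' => Complex.Gamma ((μ : ℂ) + 1) * ((t ^ (-μ) : ℝ) : ℂ) * poissonKmu n μ φ x' t)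
      (fun x' => φ x') (nhdsWithin 0 (Ioi 0)) := by
  have hψ := integrable_fourierTr (integrable_fourier_schwartz φ)
  refine ⟨fun x' t _ => integrable_poissonKmu_integrand hμ hψ x' t, ?_⟩
  have h_damped := tendstoUniformly_integral_mul_mul (l := 𝓝[>] (0 : ℝ)) hψ
    (g := fun (x' : EuclideanSpace ℝ (Fin (n - 1))) ξ => cexp (I * (∑ i, x' i * ξ i : ℝ)))
    (m := fun t ξ => (Real.exp (-(√(1 + ‖ξ‖ ^ 2) * t)) : ℂ))
    (fun _ => by fun_prop) (fun _ _ => (norm_exp_I_mul_ofReal _).le)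
    (Eventually.of_forall fun _ => by fun_prop)
    (eventually_nhdsWithin_of_forall fun t (ht : 0 < t) ξ => by
      rw [norm_real, Real.norm_of_nonneg (Real.exp_nonneg _), Real.exp_le_one_iff,
        neg_nonpos]
      positivity)
    (Eventually.of_forall fun ξ => ((Continuous.tendsto' (by fun_prop) 0 1 (by simp)).mono_left
      nhdsWithin_le_nhds))
  have h_inv (x' : EuclideanSpace ℝ (Fin (n - 1))) := integral_cexp_mul_fourierTr φ.continuous
    φ.integrable (integrable_fourier_schwartz φ) x'
  have h_scaled :=
    (uniformContinuous_const_smul ((2 * π : ℂ) ^ (n - 1))⁻¹).comp_tendstoUniformly h_damped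
  simp only [Function.comp_def, smul_eq_mul, h_inv] at h_scaled
  refine (tendstoUniformly_congr ?_).mpr h_scaled
  filter_upwards [self_mem_nhdsWithin] with t ht
  funext x'
  exact gamma_mul_rpow_neg_mul_poissonKmu (by omega) hμ φ x' ht
end

section
/- Let 0 < a < 1, let k ∈ ℕ, let δ > 0 and b > a + k, let f : (0,1) → ℂ, and let c₀, …, c_k, d₀, …, d_k ∈ ℂ satisfy f(t) − Σ_{j=0}^{k} c_j t^{a+j} = O(t^b) and f(t) − Σ_{j=0}^{k} d_j t^j = O(t^{a+k+δ}) as t → 0+. Then c_j = 0 and d_j = 0 for every j = 0, …, k. -/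
open Set Finset Filter

/-- `t ↦ t^p` tends to `0` as `t → 0⁺` when `p > 0`. -/
private lemma tendsto_rpow_zero_of_pos {p : ℝ} (hp : 0 < p) :
    Tendsto (fun t : ℝ => t ^ p) (nhdsWithin 0 (Set.Ioi 0)) (nhds 0) := by
  have h := (Real.continuousAt_rpow_const 0 p (Or.inr hp.le)).tendsto
  rw [Real.zero_rpow hp.ne'] at h
  exact h.mono_left nhdsWithin_le_nhds

/-- If a finite sum of powers with strictly increasing exponents is bounded by `C t^r` near `0⁺`
with `r` larger than all exponents, then all coefficients vanish. -/
private lemma coeffs_vanish (n : ℕ) : ∀ (e : ℕ → ℝ) (α : ℕ → ℂ) (r C ε : ℝ), 0 < ε →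
    StrictMono e → (∀ i < n, e i < r) →
    (∀ t : ℝ, 0 < t → t < ε →
      ‖∑ i ∈ Finset.range n, α i * ((t ^ e i : ℝ) : ℂ)‖ ≤ C * t ^ r) →
    ∀ i < n, α i = 0 := by
  induction n with
  | zero => intro _ _ _ _ _ _ _ _ _ i hi; omega
  | succ n ih =>
    intro e α r C ε hε hmono hr hbound
    -- First show `α 0 = 0` by dividing by `t ^ e 0` and letting `t → 0⁺`.
    set F : ℝ → ℂ := fun t => ∑ i ∈ Finset.range (n + 1), α i * ((t ^ (e i - e 0) : ℝ) : ℂ)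
      with hF
    have hFlim : Tendsto F (nhdsWithin 0 (Set.Ioi 0)) (nhds (α 0)) := by
      have : Tendsto F (nhdsWithin 0 (Set.Ioi 0))
          (nhds (∑ i ∈ Finset.range (n + 1), if i = 0 then α 0 else 0)) := by
        apply tendsto_finset_sum
        intro i _
        by_cases hi : i = 0
        · subst hi
          simp only [sub_self, Real.rpow_zero, if_true, Complex.ofReal_one, mul_one]
          exact tendsto_const_nhds
        · have hp : 0 < e i - e 0 := by
            have := hmono (Nat.pos_of_ne_zero hi)
            linarith
          have h1 : Tendsto (fun t : ℝ => ((t ^ (e i - e 0) : ℝ) : ℂ))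
              (nhdsWithin 0 (Set.Ioi 0)) (nhds ((0:ℝ) : ℂ)) :=
            (Complex.continuous_ofReal.tendsto 0).comp (tendsto_rpow_zero_of_pos hp)
          simp only [hi, if_false]
          simpa using h1.const_mul (α i)
      simpa using this
    have hFzero : Tendsto F (nhdsWithin 0 (Set.Ioi 0)) (nhds 0) := by
      apply squeeze_zero_norm' (a := fun t : ℝ => C * t ^ (r - e 0))
      · filter_upwards [Ioo_mem_nhdsGT_of_mem (Set.left_mem_Ico.mpr hε)] with t ht
        obtain ⟨ht0, htε⟩ := ht
        have he0 : (0:ℝ) < t ^ e 0 := Real.rpow_pos_of_pos ht0 _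
        have hFt : F t = (∑ i ∈ Finset.range (n + 1), α i * ((t ^ e i : ℝ) : ℂ)) /
            ((t ^ e 0 : ℝ) : ℂ) := by
          rw [hF]
          simp only
          rw [Finset.sum_div]
          refine Finset.sum_congr rfl fun i _ => ?_
          rw [mul_div_assoc, Real.rpow_sub ht0, Complex.ofReal_div]
        rw [hFt, norm_div, Complex.norm_real, Real.norm_eq_abs, abs_of_pos he0,
          div_le_iff₀ he0]
        calc ‖∑ i ∈ Finset.range (n + 1), α i * ((t ^ e i : ℝ) : ℂ)‖
            ≤ C * t ^ r := hbound t ht0 htε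
          _ = C * t ^ (r - e 0) * t ^ e 0 := by
              rw [mul_assoc, ← Real.rpow_add ht0]; ring_nf
      · have hp : 0 < r - e 0 := by have := hr 0 (Nat.succ_pos n); linarith
        simpa using (tendsto_rpow_zero_of_pos hp).const_mul C
    have hα0 : α 0 = 0 := tendsto_nhds_unique hFlim hFzero
    -- Now handle the remaining coefficients via the inductive hypothesis.
    have hrest : ∀ i < n, α (i + 1) = 0 := by
      apply ih (fun i => e (i + 1)) (fun i => α (i + 1)) r C ε hε
        (hmono.comp (fun i j hij => by omega))
        (fun i hi => hr (i + 1) (by omega))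
      intro t ht0 htε
      have := hbound t ht0 htε
      rwa [Finset.sum_range_succ', hα0, zero_mul, add_zero] at this
    intro i hi
    match i with
    | 0 => exact hα0
    | (j + 1) => exact hrest j (by omega)

/-- Pairing a sum over `range (2*m)`. -/
private lemma sum_range_two_mul {M : Type*} [AddCommMonoid M] (m : ℕ) (f : ℕ → M) :
    ∑ i ∈ Finset.range (2 * m), f i = ∑ j ∈ Finset.range m, (f (2 * j) + f (2 * j + 1)) := by
  induction m with
  | zero => simp
  | succ m ih =>
    have h2 : 2 * (m + 1) = 2 * m + 1 + 1 := by ring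
    rw [h2, Finset.sum_range_succ, Finset.sum_range_succ, ih, Finset.sum_range_succ, add_assoc]

/-- Comparison of expansions (core of Theorem 4.6): let `0 < a < 1`, `k ∈ ℕ`, `δ > 0`,
`b > a + k`. If `f(t) - Σ_{j≤k} c_j t^{a+j} = O(t^b)` and `f(t) - Σ_{j≤k} d_j t^j = O(t^{a+k+δ})`
as `t → 0+`, then all coefficients `c_j`, `d_j` with `j ≤ k` vanish. -/
theorem comparison_of_two_expansions (a : ℝ) (ha0 : 0 < a) (ha1 : a < 1) (k : ℕ) (δ b : ℝ)
    (hδ : 0 < δ) (hb : a + (k : ℝ) < b) (f : ℝ → ℂ) (c d : ℕ → ℂ)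
    (h1 : ∃ C : ℝ, 0 < C ∧ ∃ ε : ℝ, 0 < ε ∧ ε < 1 ∧ ∀ t : ℝ, 0 < t → t < ε →
      ‖f t - ∑ j ∈ Finset.range (k + 1), c j * ((t ^ (a + (j : ℝ)) : ℝ) : ℂ)‖ ≤ C * t ^ b)
    (h2 : ∃ C : ℝ, 0 < C ∧ ∃ ε : ℝ, 0 < ε ∧ ε < 1 ∧ ∀ t : ℝ, 0 < t → t < ε →
      ‖f t - ∑ j ∈ Finset.range (k + 1), d j * ((t ^ j : ℝ) : ℂ)‖ ≤ C * t ^ (a + (k : ℝ) + δ)) :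
    ∀ j ≤ k, c j = 0 ∧ d j = 0 := by
  obtain ⟨C₁, hC₁, ε₁, hε₁, hε₁1, hB₁⟩ := h1
  obtain ⟨C₂, hC₂, ε₂, hε₂, hε₂1, hB₂⟩ := h2
  -- Interleaved exponents and coefficients.
  set e : ℕ → ℝ := fun i => ((i / 2 : ℕ) : ℝ) + if i % 2 = 0 then 0 else a with he
  set α : ℕ → ℂ := fun i => if i % 2 = 0 then -d (i / 2) else c (i / 2) with hα
  have he_even : ∀ j : ℕ, e (2 * j) = (j : ℝ) := by
    intro j
    have h1 : (2 * j) / 2 = j := by omega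
    have h2 : (2 * j) % 2 = 0 := by omega
    simp [he, h1, h2]
  have he_odd : ∀ j : ℕ, e (2 * j + 1) = (j : ℝ) + a := by
    intro j
    have h1 : (2 * j + 1) / 2 = j := by omega
    have h2 : (2 * j + 1) % 2 = 1 := by omega
    simp [he, h1, h2]
  have hmono : StrictMono e := by
    apply strictMono_nat_of_lt_succ
    intro i
    rcases Nat.even_or_odd i with ⟨q, hq⟩ | ⟨q, hq⟩
    · have h1 : i = 2 * q := by omega
      rw [h1, he_even, he_odd]; linarith
    · have h1 : i = 2 * q + 1 := by omega
      rw [h1, show 2 * q + 1 + 1 = 2 * (q + 1) from by ring, he_odd, he_even]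
      push_cast; linarith
  set r : ℝ := min b (a + (k : ℝ) + δ) with hrdef
  have hrk : a + (k : ℝ) < r := lt_min hb (by linarith)
  set ε : ℝ := min ε₁ ε₂ with hεdef
  have hε : 0 < ε := lt_min hε₁ hε₂
  have hbound : ∀ t : ℝ, 0 < t → t < ε →
      ‖∑ i ∈ Finset.range (2 * (k + 1)), α i * ((t ^ e i : ℝ) : ℂ)‖ ≤ (C₁ + C₂) * t ^ r := by
    intro t ht0 htε
    have ht1 : t ≤ 1 := (lt_of_lt_of_le htε (min_le_left _ _)).le.trans hε₁1.le
    have hsum : ∑ i ∈ Finset.range (2 * (k + 1)), α i * ((t ^ e i : ℝ) : ℂ) =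
        (∑ j ∈ Finset.range (k + 1), c j * ((t ^ (a + (j : ℝ)) : ℝ) : ℂ)) -
        (∑ j ∈ Finset.range (k + 1), d j * ((t ^ j : ℝ) : ℂ)) := by
      rw [sum_range_two_mul, ← Finset.sum_sub_distrib]
      refine Finset.sum_congr rfl fun j _ => ?_
      have hd2 : (2 * j) / 2 = j := by omega
      have hm2 : (2 * j) % 2 = 0 := by omega
      have hd2' : (2 * j + 1) / 2 = j := by omega
      have hm2' : (2 * j + 1) % 2 = 1 := by omega
      have hαe : α (2 * j) = -d j := by simp [hα, hd2, hm2]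
      have hαo : α (2 * j + 1) = c j := by simp [hα, hd2', hm2']
      rw [hαe, hαo, he_even j, he_odd j, add_comm (j : ℝ) a, Real.rpow_natCast]
      ring
    rw [hsum]
    have key : (∑ j ∈ Finset.range (k + 1), c j * ((t ^ (a + (j : ℝ)) : ℝ) : ℂ)) -
        (∑ j ∈ Finset.range (k + 1), d j * ((t ^ j : ℝ) : ℂ)) =
        (f t - ∑ j ∈ Finset.range (k + 1), d j * ((t ^ j : ℝ) : ℂ)) -
        (f t - ∑ j ∈ Finset.range (k + 1), c j * ((t ^ (a + (j : ℝ)) : ℝ) : ℂ)) := by ring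
    rw [key]
    have hb₁ := hB₁ t ht0 (lt_of_lt_of_le htε (min_le_left _ _))
    have hb₂ := hB₂ t ht0 (lt_of_lt_of_le htε (min_le_right _ _))
    have htb : t ^ b ≤ t ^ r := Real.rpow_le_rpow_of_exponent_ge ht0 ht1 (min_le_left _ _)
    have htd : t ^ (a + (k : ℝ) + δ) ≤ t ^ r :=
      Real.rpow_le_rpow_of_exponent_ge ht0 ht1 (min_le_right _ _)
    calc ‖_ - _‖ ≤ ‖f t - ∑ j ∈ Finset.range (k + 1), d j * ((t ^ j : ℝ) : ℂ)‖ +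
          ‖f t - ∑ j ∈ Finset.range (k + 1), c j * ((t ^ (a + (j : ℝ)) : ℝ) : ℂ)‖ :=
        norm_sub_le _ _
      _ ≤ C₂ * t ^ (a + (k : ℝ) + δ) + C₁ * t ^ b := add_le_add hb₂ hb₁
      _ ≤ C₂ * t ^ r + C₁ * t ^ r := add_le_add
          (mul_le_mul_of_nonneg_left htd hC₂.le) (mul_le_mul_of_nonneg_left htb hC₁.le)
      _ = (C₁ + C₂) * t ^ r := by ring
  have hr : ∀ i < 2 * (k + 1), e i < r := by
    intro i hi
    have h1 : e i ≤ e (2 * k + 1) := hmono.monotone (by omega)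
    have h2 : e (2 * k + 1) = (k : ℝ) + a := he_odd k
    rw [h2] at h1
    linarith
  have hvanish := coeffs_vanish (2 * (k + 1)) e α r (C₁ + C₂) ε hε hmono hr hbound
  intro j hj
  have hd : α (2 * j) = 0 := hvanish (2 * j) (by omega)
  have hc : α (2 * j + 1) = 0 := hvanish (2 * j + 1) (by omega)
  have hd2 : (2 * j) / 2 = j := by omega
  have hm2 : (2 * j) % 2 = 0 := by omega
  have hd2' : (2 * j + 1) / 2 = j := by omega
  have hm2' : (2 * j + 1) % 2 = 1 := by omega
  simp only [hα, hd2, hm2, hd2', hm2'] at hd hc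
  constructor
  · simpa using hc
  · simpa using hd
end

section
/- Let 0 < a < s ≤ 1 and C ≥ 0, and let f : ℝ → ℝ satisfy |f(x) − f(y)| ≤ C|x−y|^s for all x, y ∈ ℝ and f(x) = 0 for all x ≤ 0. Define g : ℝ → ℝ by g(x) = f(x)/x^a for x > 0 and g(x) = 0 for x ≤ 0. Then there is a constant C' ≥ 0, depending only on C, a, s, such that |g(x) − g(y)| ≤ C'|x−y|^{s−a} for all x, y ∈ ℝ. -/
open Real

/-! Write `g x = f x / x ^ a` and `h = x - y` for `0 < y < x`; since `f` vanishes at `0`,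
`|f t| ≤ C t ^ s`, so `|g t| ≤ C t ^ (s - a)`. Far from the diagonal (`y < h`) this bound alone
gives `|g x - g y| ≤ 3 C h ^ (s - a)`, because `x ≤ 2 h`. Near it (`h ≤ y`) split
`g x - g y = (f x - f y) / x ^ a - f y (y ^ (-a) - x ^ (-a))`: the first term is at most
`C h ^ s / h ^ a`, and as `y ^ (-a) - x ^ (-a) ≤ y ^ (-a) h / x`, the second is at most
`C y ^ (s - a) (h / y) ≤ C h ^ (s - a)`. -/

theorem Real.inv_rpow_sub_inv_rpow_le {a x y : ℝ} (ha : a ≤ 1) (hy : 0 < y) (hyx : y ≤ x) :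
    (y ^ a)⁻¹ - (x ^ a)⁻¹ ≤ (y ^ a)⁻¹ * ((x - y) / x) := by
  have hx : 0 < x := hy.trans_le hyx
  have hratio : (x ^ a)⁻¹ = (y ^ a)⁻¹ * (y / x) ^ a := by
    rw [div_rpow hy.le hx.le, mul_div, inv_mul_cancel₀ (rpow_pos_of_pos hy a).ne', one_div]
  have hle : y / x ≤ (y / x) ^ a :=
    self_le_rpow_of_le_one (by positivity) ((div_le_one hx).2 hyx) ha
  calc (y ^ a)⁻¹ - (x ^ a)⁻¹ = (y ^ a)⁻¹ * (1 - (y / x) ^ a) := by rw [hratio]; ring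
    _ ≤ (y ^ a)⁻¹ * (1 - y / x) := by gcongr
    _ = (y ^ a)⁻¹ * ((x - y) / x) := by field_simp

section Holder

variable {f : ℝ → ℝ} {a s C x y : ℝ}

theorem abs_div_rpow_le_of_holder (hf : ∀ x y, |f x - f y| ≤ C * |x - y| ^ s) (hf0 : f 0 = 0)
    (hx : 0 < x) : |f x / x ^ a| ≤ C * x ^ (s - a) := by
  have hxa := rpow_pos_of_pos hx a
  rw [abs_div, abs_of_pos hxa, div_le_iff₀ hxa, mul_assoc, ← rpow_add hx, sub_add_cancel]
  simpa [hf0, abs_of_pos hx] using hf x 0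

theorem abs_div_rpow_sub_div_rpow_le_of_holder (hC : 0 ≤ C) (ha0 : 0 ≤ a) (ha1 : a ≤ 1)
    (hs : s ≤ 1) (hf : ∀ x y, |f x - f y| ≤ C * |x - y| ^ s) (hf0 : f 0 = 0)
    (hxy : 0 < x - y) (hyx : x - y ≤ y) :
    |f x / x ^ a - f y / y ^ a| ≤ 2 * C * (x - y) ^ (s - a) := by
  set h := x - y with hh
  have hy : 0 < y := hxy.trans_le hyx
  have hx : 0 < x := by linarith
  have hxa := rpow_pos_of_pos hx a
  have hya := rpow_pos_of_pos hy a
  have hdiff : 0 ≤ (y ^ a)⁻¹ - (x ^ a)⁻¹ :=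
    sub_nonneg.2 (inv_anti₀ hya (rpow_le_rpow hy.le (by linarith) ha0))
  have hincr : |(f x - f y) / x ^ a| ≤ C * h ^ (s - a) := by
    rw [abs_div, abs_of_pos hxa, div_le_iff₀ hxa, rpow_sub hxy, mul_div_assoc']
    calc |f x - f y| ≤ C * h ^ s := by simpa [← hh, abs_of_pos hxy] using hf x y
      _ ≤ C * h ^ s / h ^ a * x ^ a := by
        rw [div_mul_eq_mul_div, le_div_iff₀ (rpow_pos_of_pos hxy a)]
        gcongr
        linarith
  have hweight : |f y * ((y ^ a)⁻¹ - (x ^ a)⁻¹)| ≤ C * h ^ (s - a) := by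
    rw [abs_mul, abs_of_nonneg hdiff]
    calc |f y| * ((y ^ a)⁻¹ - (x ^ a)⁻¹)
        ≤ C * y ^ s * ((y ^ a)⁻¹ * (h / x)) := by
          gcongr
          · simpa [hf0, abs_of_pos hy] using hf y 0
          · exact inv_rpow_sub_inv_rpow_le ha1 hy (by linarith)
      _ ≤ C * y ^ (s - a) * (h / y) := by
          rw [rpow_sub hy, ← mul_assoc, mul_assoc C, ← div_eq_mul_inv]
          gcongr
          linarith
      _ ≤ C * y ^ (s - a) * (h / y) ^ (s - a) := by
          gcongr
          exact self_le_rpow_of_le_one (by positivity) ((div_le_one hy).2 hyx) (by linarith)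
      _ = C * h ^ (s - a) := by
          rw [mul_assoc, ← mul_rpow hy.le (by positivity), mul_div_cancel₀ _ hy.ne']
  calc |f x / x ^ a - f y / y ^ a|
      = |(f x - f y) / x ^ a + f y * ((x ^ a)⁻¹ - (y ^ a)⁻¹)| := by congr 1; ring
    _ ≤ |(f x - f y) / x ^ a| + |f y * ((y ^ a)⁻¹ - (x ^ a)⁻¹)| := by
      rw [← abs_neg (f y * _), neg_mul_eq_mul_neg, neg_sub]
      exact abs_add_le _ _
    _ ≤ 2 * C * h ^ (s - a) := by linarith

end Holder

section Patching

variable {g : ℝ → ℝ} {K L β x y : ℝ}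

theorem abs_sub_le_of_abs_le_mul_rpow (hK : 0 ≤ K) (hβ0 : 0 ≤ β) (hβ1 : β ≤ 1)
    (hg : ∀ x, 0 < x → |g x| ≤ K * x ^ β) (hy : 0 < y) (hyx : y ≤ x - y) :
    |g x - g y| ≤ 3 * K * (x - y) ^ β := by
  have hh : 0 < x - y := hy.trans_le hyx
  have htwo : (2 * (x - y)) ^ β ≤ 2 * (x - y) ^ β := by
    rw [mul_rpow zero_le_two hh.le]
    gcongr
    exact rpow_le_self_of_one_le one_le_two hβ1
  have hgx : |g x| ≤ 2 * K * (x - y) ^ β :=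
    calc |g x| ≤ K * x ^ β := hg x (by linarith)
      _ ≤ K * (2 * (x - y)) ^ β := by gcongr <;> linarith
      _ ≤ 2 * K * (x - y) ^ β := by linarith [mul_le_mul_of_nonneg_left htwo hK]
  have hgy : |g y| ≤ K * (x - y) ^ β :=
    (hg y hy).trans (by gcongr)
  linarith [abs_sub (g x) (g y)]

theorem abs_sub_le_max_mul_rpow (hK : 0 ≤ K) (hβ0 : 0 ≤ β) (hβ1 : β ≤ 1)
    (hg0 : ∀ x ≤ 0, g x = 0) (hg : ∀ x, 0 < x → |g x| ≤ K * x ^ β)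
    (hnear : ∀ x y, 0 < x - y → x - y ≤ y → |g x - g y| ≤ L * (x - y) ^ β) (x y : ℝ) :
    |g x - g y| ≤ max (3 * K) L * |x - y| ^ β := by
  wlog hyx : y ≤ x generalizing x y
  · rw [abs_sub_comm, abs_sub_comm x]
    exact this y x (le_of_not_ge hyx)
  have hM : 3 * K ≤ max (3 * K) L := le_max_left _ _
  rcases hyx.eq_or_lt with rfl | hlt
  · simp only [sub_self, abs_zero]
    positivity
  have hh : 0 < x - y := sub_pos.2 hlt
  rw [abs_of_pos hh]
  rcases le_or_gt y 0 with hy | hy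
  · rw [hg0 y hy, sub_zero]
    rcases le_or_gt x 0 with hx | hx
    · rw [hg0 x hx, abs_zero]
      positivity
    calc |g x| ≤ K * x ^ β := hg x hx
      _ ≤ max (3 * K) L * (x - y) ^ β := by gcongr <;> linarith
  rcases le_or_gt (x - y) y with hnd | hfar
  · exact (hnear x y hh hnd).trans (by gcongr; exact le_max_right _ _)
  · exact (abs_sub_le_of_abs_le_mul_rpow hK hβ0 hβ1 hg hy hfar.le).trans (by gcongr)

end Patching

/-- One-dimensional model of `Ċ^s(Ω̄) ⊂ d^a Ċ^{s-a}(Ω̄)`: if `0 < a < s ≤ 1` and `f` is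
`s`-Hölder with constant `C` and vanishes on `(-∞,0]`, then `g(x) = f(x)/x^a` (for `x > 0`,
`g = 0` for `x ≤ 0`) is `(s-a)`-Hölder with a constant `C'` depending only on `C, a, s`. -/
theorem holder_div_power (a s C : ℝ) (ha : 0 < a) (has : a < s) (hs1 : s ≤ 1) (hC : 0 ≤ C) :
    ∃ C' : ℝ, 0 ≤ C' ∧ ∀ f : ℝ → ℝ,
      (∀ x y : ℝ, |f x - f y| ≤ C * |x - y| ^ s) →
      (∀ x : ℝ, x ≤ 0 → f x = 0) →
      ∀ x y : ℝ,
        |(if 0 < x then f x / x ^ a else 0) - (if 0 < y then f y / y ^ a else 0)|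
          ≤ C' * |x - y| ^ (s - a) := by
  refine ⟨max (3 * C) (2 * C), by positivity, fun f hf hf0 => ?_⟩
  have hf00 : f 0 = 0 := hf0 0 le_rfl
  refine abs_sub_le_max_mul_rpow (g := fun x => if 0 < x then f x / x ^ a else 0) hC
    (by linarith) (by linarith) (fun x hx => if_neg hx.not_gt) (fun x hx => ?_) (fun x y hxy hyx => ?_)
  · simpa only [if_pos hx] using abs_div_rpow_le_of_holder hf hf00 hx
  · have hy : 0 < y := hxy.trans_le hyx
    have hx : 0 < x := by linarith
    simpa only [if_pos hx, if_pos hy] using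
      abs_div_rpow_sub_div_rpow_le_of_holder hC ha.le (by linarith) hs1 hf hf00 hxy hyx
end

section
/- Let 0 < a < 1 and let g : ℝ → ℝ and h : ℝ → ℝ be infinitely differentiable functions such that h(t) = t^a g(t) for all t > 0. Then for every j ∈ ℕ, the j-th derivative of g at 0 equals 0 and the j-th derivative of h at 0 equals 0. -/
open Filter Topology Set

/-- If the first `n` derivatives of a smooth `f` vanish at `0`, then
`f t / t^n → f⁽ⁿ⁾(0)/n!` as `t → 0⁺`. Proved by iterated L'Hôpital. -/
lemma coeff_lim : ∀ (n : ℕ) (f : ℝ → ℝ), ContDiff ℝ (⊤ : ℕ∞) f →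
    (∀ i < n, iteratedDeriv i f 0 = 0) →
    Filter.Tendsto (fun t : ℝ => f t / t ^ n) (𝓝[>] (0:ℝ))
      (𝓝 (iteratedDeriv n f 0 / (Nat.factorial n : ℝ))) := by
  intro n
  induction n with
  | zero =>
    intro f hf _
    simpa using (hf.continuous.tendsto 0).mono_left nhdsWithin_le_nhds
  | succ n ih =>
    intro f hf h0
    have hf' : ContDiff ℝ (⊤ : ℕ∞) (deriv f) := (contDiff_infty_iff_deriv.mp hf).2
    have h0' : ∀ i < n, iteratedDeriv i (deriv f) 0 = 0 := by
      intro i hi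
      rw [← iteratedDeriv_succ']
      exact h0 (i + 1) (by omega)
    have hdf := ih (deriv f) hf' h0'
    rw [← iteratedDeriv_succ'] at hdf
    -- the limit of the quotient of the derivatives
    have hdiv : Filter.Tendsto
        (fun x : ℝ => deriv f x / deriv (fun t : ℝ => t ^ (n + 1)) x) (𝓝[>] (0:ℝ))
        (𝓝 (iteratedDeriv (n + 1) f 0 / (Nat.factorial (n + 1) : ℝ))) := by
      have h1 : Filter.Tendsto
          (fun x : ℝ => (deriv f x / x ^ n) / ((n : ℝ) + 1)) (𝓝[>] (0:ℝ))
          (𝓝 (iteratedDeriv (n + 1) f 0 / (Nat.factorial n : ℝ) / ((n : ℝ) + 1))) :=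
        hdf.div_const _
      have h2 : iteratedDeriv (n + 1) f 0 / (Nat.factorial n : ℝ) / ((n : ℝ) + 1)
          = iteratedDeriv (n + 1) f 0 / (Nat.factorial (n + 1) : ℝ) := by
        rw [Nat.factorial_succ]
        push_cast
        rw [div_div]
        ring_nf
      rw [h2] at h1
      apply h1.congr'
      filter_upwards [self_mem_nhdsWithin] with x (hx : (0:ℝ) < x)
      rw [deriv_pow_field, div_div]
      simp only [Nat.add_sub_cancel]
      push_cast
      ring_nf
    apply deriv.lhopital_zero_nhdsGT
    · exact Eventually.of_forall fun x => (hf.differentiable (by simp)).differentiableAt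
    · filter_upwards [self_mem_nhdsWithin] with x (hx : (0:ℝ) < x)
      rw [deriv_pow_field]
      positivity
    · have hf0 : f 0 = 0 := by
        have := h0 0 (Nat.succ_pos n)
        rwa [iteratedDeriv_zero] at this
      have := (hf.continuous.tendsto 0).mono_left
        (nhdsWithin_le_nhds : 𝓝[>] (0:ℝ) ≤ 𝓝 0)
      rwa [hf0] at this
    · have : Filter.Tendsto (fun t : ℝ => t ^ (n + 1)) (𝓝 (0:ℝ)) (𝓝 ((0:ℝ) ^ (n + 1))) :=
        (continuous_pow (n + 1)).tendsto 0
      rw [zero_pow (Nat.succ_ne_zero n)] at this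
      exact this.mono_left nhdsWithin_le_nhds
    · exact hdiv

/-- One-dimensional model of Theorem 4.7: if `g, h` are smooth on `ℝ` and `h(t) = t^a g(t)`
for all `t > 0` with `0 < a < 1`, then all derivatives of `g` and of `h` vanish at `0`. -/
theorem smooth_and_power_factor_forces_flat (a : ℝ) (ha0 : 0 < a) (ha1 : a < 1)
    (g h : ℝ → ℝ) (hg : ContDiff ℝ (⊤ : ℕ∞) g) (hh : ContDiff ℝ (⊤ : ℕ∞) h)
    (hgh : ∀ t : ℝ, 0 < t → h t = t ^ a * g t) :
    ∀ j : ℕ, iteratedDeriv j g 0 = 0 ∧ iteratedDeriv j h 0 = 0 := by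
  -- rpow tendsto facts
  have hpow : ∀ b : ℝ, 0 < b →
      Filter.Tendsto (fun t : ℝ => t ^ b) (𝓝[>] (0:ℝ)) (𝓝 0) := by
    intro b hb
    have := (Real.continuousAt_rpow_const 0 b (Or.inr hb.le)).tendsto
    rw [Real.zero_rpow (ne_of_gt hb)] at this
    exact this.mono_left nhdsWithin_le_nhds
  intro j
  induction j using Nat.strong_induction_on with
  | _ j IH =>
    -- first: the j-th derivative of h vanishes
    have hgl := coeff_lim j g (hg.of_le (by simp)) (fun i hi => (IH i hi).1)
    have hhl := coeff_lim j h (hh.of_le (by simp)) (fun i hi => (IH i hi).2)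
    have hh0 : iteratedDeriv j h 0 = 0 := by
      have hmul : Filter.Tendsto (fun t : ℝ => t ^ a * (g t / t ^ j)) (𝓝[>] (0:ℝ))
          (𝓝 (0 * (iteratedDeriv j g 0 / (Nat.factorial j : ℝ)))) :=
        (hpow a ha0).mul hgl
      rw [zero_mul] at hmul
      have heq : Filter.Tendsto (fun t : ℝ => h t / t ^ j) (𝓝[>] (0:ℝ)) (𝓝 0) := by
        apply hmul.congr'
        filter_upwards [self_mem_nhdsWithin] with t (ht : (0:ℝ) < t)
        rw [hgh t ht]
        ring
      have := tendsto_nhds_unique hhl heq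
      have hfac : (Nat.factorial j : ℝ) ≠ 0 := Nat.cast_ne_zero.mpr (Nat.factorial_ne_zero j)
      field_simp at this
      simpa using this
    -- then: the j-th derivative of g vanishes
    have hh0' : ∀ i < j + 1, iteratedDeriv i h 0 = 0 := by
      intro i hi
      rcases Nat.lt_succ_iff_lt_or_eq.mp hi with hi' | rfl
      · exact (IH i hi').2
      · exact hh0
    have hhl' := coeff_lim (j + 1) h (hh.of_le (by simp)) hh0'
    have hg0 : iteratedDeriv j g 0 = 0 := by
      have hmul : Filter.Tendsto
          (fun t : ℝ => (h t / t ^ (j + 1)) * t ^ ((1:ℝ) - a)) (𝓝[>] (0:ℝ))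
          (𝓝 ((iteratedDeriv (j + 1) h 0 / (Nat.factorial (j + 1) : ℝ)) * 0)) :=
        hhl'.mul (hpow (1 - a) (by linarith))
      rw [mul_zero] at hmul
      have heq : Filter.Tendsto (fun t : ℝ => g t / t ^ j) (𝓝[>] (0:ℝ)) (𝓝 0) := by
        apply hmul.congr'
        filter_upwards [self_mem_nhdsWithin] with t (ht : (0:ℝ) < t)
        have h1 : t ^ a * t ^ ((1:ℝ) - a) = t := by
          rw [← Real.rpow_add ht, add_sub_cancel, Real.rpow_one]
        have htj : (t : ℝ) ^ j ≠ 0 := pow_ne_zero _ (ne_of_gt ht)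
        calc h t / t ^ (j + 1) * t ^ ((1:ℝ) - a)
            = g t * (t ^ a * t ^ ((1:ℝ) - a)) / (t ^ j * t) := by
              rw [hgh t ht, pow_succ]; ring
          _ = g t * t / (t ^ j * t) := by rw [h1]
          _ = g t / t ^ j := by rw [mul_div_mul_right _ _ (ne_of_gt ht)]
      have := tendsto_nhds_unique hgl heq
      have hfac : (Nat.factorial j : ℝ) ≠ 0 := Nat.cast_ne_zero.mpr (Nat.factorial_ne_zero j)
      field_simp at this
      simpa using this
    exact ⟨hg0, hh0⟩
end
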